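/- arXiv:1307.5547 — 4 statements merged into one kernel-verified Lean document; each statement's English description precedes it below -/
import Mathlib

section
/- Let G be a connected probe interval graph. Every consecutive-ones ordered clique matrix of G**, when interpreted as a probe interval model with probes P and non-probes N ∖ N_S, is a normal probe interval model of G − N_S. -/
open Set

/-- A set of columns is consecutive in the column order. -/
def ConsecSet {k : ℕ} (A : Set (Fin k)) : Prop :=
  ∀ i j l : Fin k, i ≤ j → j ≤ l → i ∈ A → l ∈ A → j ∈ A

/-- Every row of the 0-1 matrix `M` has a nonempty consecutive block of 1's. -/
def RowsOK {V : Type} {k : ℕ} (M : V → Fin k → Prop) : Prop :=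
  ∀ v : V, {j | M v j}.Nonempty ∧ ConsecSet {j | M v j}

/-- The matrix `M` represents exactly the adjacencies of `G`, where `P` is the probe set:
two distinct vertices are adjacent iff some column has a 1 in both rows and at least
one of the two vertices is a probe. -/
def Represents {V : Type} {k : ℕ} (G : SimpleGraph V) (P : Set V)
    (M : V → Fin k → Prop) : Prop :=
  ∀ u v : V, u ≠ v → (G.Adj u v ↔ (u ∈ P ∨ v ∈ P) ∧ ∃ j, M u j ∧ M v j)

/-- `M` is a probe interval model of `G` with probe set `P`. -/
def IsPIModel {V : Type} {k : ℕ} (G : SimpleGraph V) (P : Set V)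
    (M : V → Fin k → Prop) : Prop :=
  RowsOK M ∧ Represents G P M

/-- The pairs of vertices that the matrix represents as adjacent. -/
def RepAdj {V : Type} {k : ℕ} (P : Set V) (M : V → Fin k → Prop) (u v : V) : Prop :=
  u ≠ v ∧ (u ∈ P ∨ v ∈ P) ∧ ∃ j, M u j ∧ M v j

/-- `c` is the left endpoint of row `v`: the first column where the row has a 1. -/
def IsLeftEnd {V : Type} {k : ℕ} (M : V → Fin k → Prop) (v : V) (c : Fin k) : Prop :=
  M v c ∧ ∀ j, M v j → c ≤ j

/-- `c` is the right endpoint of row `v`: the last column where the row has a 1. -/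
def IsRightEnd {V : Type} {k : ℕ} (M : V → Fin k → Prop) (v : V) (c : Fin k) : Prop :=
  M v c ∧ ∀ j, M v j → j ≤ c

/-- A proper left endpoint: the left endpoint of a row with a 1 in more than one column. -/
def IsProperLeftEnd {V : Type} {k : ℕ} (M : V → Fin k → Prop) (v : V) (c : Fin k) : Prop :=
  IsLeftEnd M v c ∧ ∃ j, M v j ∧ j ≠ c

/-- A proper right endpoint: the right endpoint of a row with a 1 in more than one column. -/
def IsProperRightEnd {V : Type} {k : ℕ} (M : V → Fin k → Prop) (v : V) (c : Fin k) : Prop :=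
  IsRightEnd M v c ∧ ∃ j, M v j ∧ j ≠ c

/-- `M'` is obtained from `M` by a contraction of row `v`: the first or last 1 of
row `v` is changed to a 0, resulting in a shorter (still nonempty) interval. -/
def Contraction {V : Type} {k : ℕ} (M M' : V → Fin k → Prop) (v : V) : Prop :=
  ∃ c : Fin k, (IsProperLeftEnd M v c ∨ IsProperRightEnd M v c) ∧
    ∀ u j, M' u j ↔ M u j ∧ ¬(u = v ∧ j = c)

/-- Row `v` is taut: every contraction of it changes the set of vertex pairs that
the matrix represents as adjacent. -/
def TautRow {V : Type} {k : ℕ} (P : Set V) (M : V → Fin k → Prop) (v : V) : Prop :=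
  ∀ M' : V → Fin k → Prop, Contraction M M' v → RepAdj P M' ≠ RepAdj P M

/-- Every row of the model is taut. -/
def Taut {V : Type} {k : ℕ} (P : Set V) (M : V → Fin k → Prop) : Prop :=
  ∀ v : V, TautRow P M v

/-- The matrix obtained from `M` by merging the consecutive columns `i` and `i + 1`
(replacing them by their entrywise OR). -/
def mergeCols {V : Type} {k : ℕ} (M : V → Fin k → Prop) (i : ℕ) :
    V → Fin (k - 1) → Prop := fun v j =>
  if h1 : j.val < i then M v ⟨j.val, by have := j.isLt; omega⟩
  else if h2 : j.val = i then
    M v ⟨i, by have := j.isLt; omega⟩ ∨ M v ⟨i + 1, by have := j.isLt; omega⟩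
  else M v ⟨j.val + 1, by have := j.isLt; omega⟩

/-- The consecutive columns `i` and `i + 1` of the model `M` of `G` can be merged:
replacing them by their entrywise OR again yields a probe interval model representing
the same adjacencies. -/
def CanMerge {V : Type} {k : ℕ} (G : SimpleGraph V) (P : Set V)
    (M : V → Fin k → Prop) (i : ℕ) : Prop :=
  i + 1 < k ∧ IsPIModel G P (mergeCols M i)

/-- No two consecutive columns of the model can be merged. -/
def MinimalModel {V : Type} {k : ℕ} (G : SimpleGraph V) (P : Set V)
    (M : V → Fin k → Prop) : Prop :=
  ∀ i : ℕ, ¬ CanMerge G P M i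

/-- A normal probe interval model: a probe interval model that is taut and minimal. -/
def IsNormalModel {V : Type} {k : ℕ} (G : SimpleGraph V) (P : Set V)
    (M : V → Fin k → Prop) : Prop :=
  IsPIModel G P M ∧ Taut P M ∧ MinimalModel G P M

/-- The vertex set of a column: the vertices whose rows have a 1 in that column. -/
def colVerts {V : Type} {k : ℕ} (M : V → Fin k → Prop) (j : Fin k) : Set V :=
  {v | M v j}

/-- The probe set of a column. -/
def probeSetCol {V : Type} {k : ℕ} (P : Set V) (M : V → Fin k → Prop)
    (j : Fin k) : Set V :=
  {v | v ∈ P ∧ M v j}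

/-- The probe set of the column with (natural number) index `n`, empty if out of range. -/
def probeSetAt {W : Type} {K : ℕ} (P : Set W) (M : W → Fin K → Prop) (n : ℕ) : Set W :=
  {v | v ∈ P ∧ ∃ hn : n < K, M v ⟨n, hn⟩}

/-- `G` is a probe interval graph with respect to the probe set `P`. -/
def IsPIGraph {V : Type} (G : SimpleGraph V) (P : Set V) : Prop :=
  ∃ (k : ℕ) (M : V → Fin k → Prop), IsPIModel G P M

/-- `x` is a simplicial non-probe: a non-probe whose neighborhood induces a
complete subgraph. -/
def SimpNonProbe {V : Type} (G : SimpleGraph V) (P : Set V) (x : V) : Prop :=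
  x ∉ P ∧ G.IsClique (G.neighborSet x)

/-- The set `N_S` of simplicial non-probes. -/
def setNS {V : Type} (G : SimpleGraph V) (P : Set V) : Set V :=
  {x | SimpNonProbe G P x}

/-- `K` is (the vertex set of) a maximal complete subgraph of `H`. -/
def IsMaxClique {W : Type} (H : SimpleGraph W) (K : Set W) : Prop :=
  H.IsClique K ∧ ∀ K' : Set W, H.IsClique K' → K ⊆ K' → K' = K

/-- `K` is (the vertex set of) a maximal complete subgraph of `G[P]`. -/
def IsMaxPClique {V : Type} (G : SimpleGraph V) (P : Set V) (K : Set V) : Prop :=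
  (K ⊆ P ∧ K.Pairwise G.Adj) ∧
    ∀ K' : Set V, K' ⊆ P → K'.Pairwise G.Adj → K ⊆ K' → K' = K

/-- A clique column: its vertex set contains a clique of `G[P]`. -/
def IsCliqueCol {V : Type} {k : ℕ} (G : SimpleGraph V) (P : Set V)
    (M : V → Fin k → Prop) (j : Fin k) : Prop :=
  ∃ K : Set V, IsMaxPClique G P K ∧ K ⊆ colVerts M j

/-- A left semi-clique column: it contains a proper right endpoint of a probe and a
proper left endpoint of a non-probe, but no left endpoint of a probe and no right
endpoint of a non-probe. -/
def IsLeftSemiCol {V : Type} {k : ℕ} (P : Set V) (M : V → Fin k → Prop)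
    (j : Fin k) : Prop :=
  (∃ p ∈ P, IsProperRightEnd M p j) ∧ (∃ x, x ∉ P ∧ IsProperLeftEnd M x j) ∧
    (∀ p ∈ P, ¬ IsLeftEnd M p j) ∧ (∀ x, x ∉ P → ¬ IsRightEnd M x j)

/-- A right semi-clique column (symmetric to a left semi-clique column). -/
def IsRightSemiCol {V : Type} {k : ℕ} (P : Set V) (M : V → Fin k → Prop)
    (j : Fin k) : Prop :=
  (∃ p ∈ P, IsProperLeftEnd M p j) ∧ (∃ x, x ∉ P ∧ IsProperRightEnd M x j) ∧
    (∀ p ∈ P, ¬ IsRightEnd M p j) ∧ (∀ x, x ∉ P → ¬ IsLeftEnd M x j)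

/-- A semi-clique column: a left or right semi-clique column. -/
def IsSemiCol {V : Type} {k : ℕ} (P : Set V) (M : V → Fin k → Prop)
    (j : Fin k) : Prop :=
  IsLeftSemiCol P M j ∨ IsRightSemiCol P M j

/-- A simplicial column: not a clique column, its vertex set contains a simplicial
non-probe, and it contains no endpoint of a non-simplicial non-probe. -/
def IsSimpCol {V : Type} {k : ℕ} (G : SimpleGraph V) (P : Set V)
    (M : V → Fin k → Prop) (j : Fin k) : Prop :=
  ¬ IsCliqueCol G P M j ∧ (∃ x, SimpNonProbe G P x ∧ M x j) ∧
    ∀ x, x ∉ P → ¬ SimpNonProbe G P x → ¬ IsLeftEnd M x j ∧ ¬ IsRightEnd M x j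

/-- The probe set of the induced subgraph `G - N_S` on `V \ N_S`. -/
def probesPS {V : Type} (G : SimpleGraph V) (P : Set V) : Set ↥((setNS G P)ᶜ) :=
  {v | (v : V) ∈ P}

/-- The graph `G**` on `V \ N_S`: its edges are those of `G - N_S` together with the
pairs `x y` of non-probes such that `N(x) ∩ N(y)` equals a clique of `G[P]` or
contains two nonadjacent vertices. -/
def Gss {V : Type} (G : SimpleGraph V) (P : Set V) : SimpleGraph ↥((setNS G P)ᶜ) :=
  SimpleGraph.fromRel (fun u v =>
    G.Adj (u : V) (v : V) ∨
      ((u : V) ∉ P ∧ (v : V) ∉ P ∧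
        ((∃ K : Set V, IsMaxPClique G P K ∧
            G.neighborSet (u : V) ∩ G.neighborSet (v : V) = K) ∨
          (∃ a b : V, a ∈ G.neighborSet (u : V) ∩ G.neighborSet (v : V) ∧
            b ∈ G.neighborSet (u : V) ∩ G.neighborSet (v : V) ∧
            a ≠ b ∧ ¬ G.Adj a b))))

/-- `M` is a consecutive-ones ordered clique matrix of `H`: it has one column per
maximal clique of `H`, with a 1 in row `v` and column `K` exactly when `v ∈ K`, and
the 1's in every row are consecutive. -/
def IsC1CliqueMatrix {W : Type} (H : SimpleGraph W) {k : ℕ}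
    (M : W → Fin k → Prop) : Prop :=
  (∃ f : Fin k → Set W, Function.Injective f ∧
      (∀ j, IsMaxClique H (f j)) ∧ (∀ K, IsMaxClique H K → ∃ j, f j = K) ∧
      (∀ v j, M v j ↔ v ∈ f j)) ∧
    ∀ v : W, ConsecSet {j | M v j}

/-- A 0-1 matrix (with rows indexed by `R`) has the consecutive-ones property. -/
def HasC1P {R : Type} {n : ℕ} (M : R → Fin n → Prop) : Prop :=
  ∃ σ : Equiv.Perm (Fin n), ∀ r, ConsecSet {j | M r (σ j)}

/-- Two sets properly overlap. -/
def ProperOverlap {α : Type} (A B : Set α) : Prop :=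
  (A ∩ B).Nonempty ∧ (A \ B).Nonempty ∧ (B \ A).Nonempty


/-!
In a clique matrix of `G**` two vertices share a column iff they are adjacent in `G**`, and `G**`
agrees with `G` on every pair containing a probe, so the matrix is a probe interval model of
`G - N_S`. The key observation: if the interval of a non-probe `w` ends at column `c₁` and that of
a non-probe `z ≠ w` starts at column `c₂ ≥ c₁`, then `N(w) ∩ N(z)` is the set of probes present in
both columns, a complete subgraph of `G[P]`; hence `wz` is an edge of `G**` exactly when this set
is a clique of `G[P]`.

Tautness: contracting the left end `c` of a row `v` loses an adjacency unless `v` is a non-probe and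
every probe of column `c` continues into column `c + 1`. Then `v` and a vertex ending at `c` make
the probes of `c` a clique of `G[P]`, so every pair across the two columns is an edge of `G**`,
contradicting the maximality of column `c`.

Minimality: if columns `c`, `c + 1` had the same probes, a non-probe ending at `c` and one starting
at `c + 1` show that these probes are not a clique of `G[P]`. A larger complete subgraph of `G[P]`
lies in a column `e` outside `{c, c + 1}`, say `e < c`. A vertex starting at `c` is then a
non-probe; it is not the non-probe ending at `c`, because a non-probe confined to one column is
simplicial, and the two make the probes of `c` a clique of `G[P]` after all.

Statements about right ends are those about left ends in the order dual of the column order.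
-/

theorem exists_isMaxClique_superset {W : Type} (H : SimpleGraph W) {s : Set W}
    (hs : H.IsClique s) : ∃ K, IsMaxClique H K ∧ s ⊆ K := by
  obtain ⟨K, hsK, hK⟩ := zorn_subset_nonempty {K | H.IsClique K}
    (fun c hc hchain _ => ⟨⋃₀ c, (pairwise_sUnion hchain.directedOn).2 hc,
      fun _ => subset_sUnion_of_mem⟩) s hs
  exact ⟨K, ⟨hK.prop, fun K' hK' hKK' => (hK.eq_of_subset hK' hKK').symm⟩, hsK⟩

theorem ConsecSet.ordConnected {k : ℕ} {A : Set (Fin k)} (h : ConsecSet A) : A.OrdConnected :=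
  ⟨fun i hi l hl j hj => h i j l hj.1 hj.2 hi hl⟩

namespace Set.OrdConnected

variable {ι : Type*} [LinearOrder ι] {s : Set ι} {c d j : ι}

theorem le_of_covBy (hs : s.OrdConnected) (hcd : c ⋖ d) (hc : c ∈ s) (hd : d ∉ s)
    (hj : j ∈ s) : j ≤ c :=
  le_of_not_gt fun hcj => hd (hs.out hc hj ⟨hcd.lt.le, hcd.ge_of_gt hcj⟩)

theorem ge_of_covBy (hs : s.OrdConnected) (hcd : c ⋖ d) (hd : d ∈ s) (hc : c ∉ s)
    (hj : j ∈ s) : d ≤ j :=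
  le_of_not_gt fun hjd => hc (hs.out hj hd ⟨hcd.le_of_lt hjd, hcd.lt.le⟩)

end Set.OrdConnected

/-- Column `j` of `M` is the set `{v | M v j}`; the columns are exactly the maximal cliques
of `H`, each listed once. -/
structure IsCliqueMatrix {W : Type} {ι : Type*} (H : SimpleGraph W) (M : W → ι → Prop) :
    Prop where
  isMaxClique : ∀ j, IsMaxClique H {v | M v j}
  injective : Function.Injective fun j => {v | M v j}
  exists_eq : ∀ K, IsMaxClique H K → ∃ j, {v | M v j} = K

theorem IsC1CliqueMatrix.isCliqueMatrix {W : Type} {H : SimpleGraph W} {k : ℕ}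
    {M : W → Fin k → Prop} (hM : IsC1CliqueMatrix H M) : IsCliqueMatrix H M := by
  obtain ⟨⟨f, hinj, hmax, hsurj, hmem⟩, -⟩ := hM
  have hf : (fun j => {v | M v j}) = f := funext fun j => Set.ext fun v => hmem v j
  refine ⟨fun j => ?_, hf ▸ hinj, fun K hK => ?_⟩
  · exact congrFun hf j ▸ hmax j
  · simpa only [← hf] using hsurj K hK

namespace IsCliqueMatrix

variable {W : Type} {ι : Type*} {H : SimpleGraph W} {M : W → ι → Prop}

theorem exists_col_of_isClique (hM : IsCliqueMatrix H M) {s : Set W} (hs : H.IsClique s) :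
    ∃ j, ∀ v ∈ s, M v j := by
  obtain ⟨K, hK, hsK⟩ := exists_isMaxClique_superset H hs
  obtain ⟨j, rfl⟩ := hM.exists_eq K hK
  exact ⟨j, fun v hv => hsK hv⟩

theorem exists_col (hM : IsCliqueMatrix H M) (v : W) : ∃ j, M v j := by
  obtain ⟨j, hj⟩ := hM.exists_col_of_isClique (H.isClique_singleton v)
  exact ⟨j, hj v rfl⟩

theorem exists_col_of_adj (hM : IsCliqueMatrix H M) {u v : W} (h : H.Adj u v) :
    ∃ j, M u j ∧ M v j := by
  obtain ⟨j, hj⟩ := hM.exists_col_of_isClique (SimpleGraph.isClique_pair.2 fun _ => h)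
  exact ⟨j, hj u (by simp), hj v (by simp)⟩

theorem adj_of_col (hM : IsCliqueMatrix H M) {u v : W} (huv : u ≠ v) {j : ι} (hu : M u j)
    (hv : M v j) : H.Adj u v :=
  (hM.isMaxClique j).1 hu hv huv

theorem exists_mem_not_mem (hM : IsCliqueMatrix H M) {c d : ι} (hcd : c ≠ d) :
    ∃ u, M u c ∧ ¬ M u d := by
  by_contra! h
  exact hcd (hM.injective ((hM.isMaxClique c).2 _ (hM.isMaxClique d).1 h).symm)

theorem exists_not_adj_of_ne (hM : IsCliqueMatrix H M) {c d : ι} (hcd : c ≠ d) :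
    ∃ a b, M a c ∧ ¬ M a d ∧ M b d ∧ ¬ M b c ∧ ¬ H.Adj a b := by
  by_contra! hcross
  have hadj : ∀ a, M a c → ∀ b, M b d → a ≠ b → H.Adj a b := by
    intro a ha b hb hab
    by_cases hbc : M b c
    · exact hM.adj_of_col hab ha hbc
    by_cases had : M a d
    · exact hM.adj_of_col hab had hb
    exact hcross a b ha had hb hbc
  have hunion : H.IsClique ({v | M v c} ∪ {v | M v d}) :=
    pairwise_union.2 ⟨(hM.isMaxClique c).1, (hM.isMaxClique d).1,
      fun a ha b hb hab => ⟨hadj a ha b hb hab, (hadj a ha b hb hab).symm⟩⟩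
  have hc := (hM.isMaxClique c).2 _ hunion subset_union_left
  have hd := (hM.isMaxClique d).2 _ (hM.isMaxClique c).1 (hc ▸ subset_union_right)
  exact hcd (hM.injective hd)

end IsCliqueMatrix

theorem mem_compl_setNS_of_mem {V : Type} {G : SimpleGraph V} {P : Set V} {x : V}
    (hx : x ∈ P) : x ∈ (setNS G P)ᶜ :=
  fun h => h.1 hx

section Gss

variable {V : Type} {G : SimpleGraph V} {P : Set V} {u v : ↥(setNS G P)ᶜ}

theorem gss_adj_of_adj (h : G.Adj u v) : (Gss G P).Adj u v := by
  rw [Gss, SimpleGraph.fromRel_adj]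
  exact ⟨fun huv => h.ne (congrArg Subtype.val huv), Or.inl (Or.inl h)⟩

theorem adj_of_gss_adj (h : (Gss G P).Adj u v) (hp : ↑u ∈ P ∨ ↑v ∈ P) : G.Adj u v := by
  rw [Gss, SimpleGraph.fromRel_adj] at h
  rcases h.2 with (h | ⟨hu, hv, -⟩) | (h | ⟨hv, hu, -⟩)
  · exact h
  · exact absurd hp (by tauto)
  · exact h.symm
  · exact absurd hp (by tauto)

theorem gss_adj_iff_isMaxPClique (hPc : G.IsIndepSet Pᶜ) (hu : ↑u ∉ P) (hv : ↑v ∉ P)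
    (huv : u ≠ v) (hpw : (G.neighborSet u ∩ G.neighborSet v).Pairwise G.Adj) :
    (Gss G P).Adj u v ↔ IsMaxPClique G P (G.neighborSet u ∩ G.neighborSet v) := by
  rw [Gss, SimpleGraph.fromRel_adj]
  constructor
  · rintro ⟨-, (h | ⟨-, -, ⟨K, hK, rfl⟩ | ⟨a, b, ha, hb, hab, hnab⟩⟩) |
      (h | ⟨-, -, ⟨K, hK, hKeq⟩ | ⟨a, b, ha, hb, hab, hnab⟩⟩)⟩
    · exact absurd h (hPc hu hv h.ne)
    · exact hK
    · exact absurd (hpw ha hb hab) hnab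
    · exact absurd h (hPc hv hu h.ne)
    · rwa [inter_comm, hKeq]
    · exact absurd (hpw ⟨ha.2, ha.1⟩ ⟨hb.2, hb.1⟩ hab) hnab
  · exact fun h => ⟨huv, Or.inl (Or.inr ⟨hu, hv, Or.inl ⟨_, h, rfl⟩⟩)⟩

end Gss

-- The probe set of column `j`, taken in `V` so that it can be compared with neighbourhoods in `G`.
def colProbes {V : Type} {G : SimpleGraph V} {P : Set V} {ι : Type*}
    (M : ↥(setNS G P)ᶜ → ι → Prop) (j : ι) : Set V :=
  Subtype.val '' {p | ↑p ∈ P ∧ M p j}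

section ColProbes

variable {V : Type} {G : SimpleGraph V} {P : Set V} {ι : Type*} {M : ↥(setNS G P)ᶜ → ι → Prop}

theorem coe_mem_colProbes {p : ↥(setNS G P)ᶜ} {j : ι} :
    ↑p ∈ colProbes M j ↔ ↑p ∈ P ∧ M p j :=
  Subtype.val_injective.mem_set_image

theorem colProbes_subset (j : ι) : colProbes M j ⊆ P := by
  rintro _ ⟨p, ⟨hp, -⟩, rfl⟩
  exact hp

theorem ordConnected_colProbes [LinearOrder ι] (hrow : ∀ v, {j | M v j}.OrdConnected) (x : V) :
    {j | x ∈ colProbes M j}.OrdConnected := by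
  refine ⟨?_⟩
  rintro i ⟨p, ⟨hp, hpi⟩, rfl⟩ l ⟨q, ⟨-, hql⟩, hqp⟩ j hj
  obtain rfl := Subtype.ext hqp
  exact ⟨q, ⟨hp, (hrow q).out hpi hql hj⟩, rfl⟩

end ColProbes

namespace IsCliqueMatrix

variable {V : Type} {G : SimpleGraph V} {P : Set V} {ι : Type*} {M : ↥(setNS G P)ᶜ → ι → Prop}
  (hM : IsCliqueMatrix (Gss G P) M) (hPc : G.IsIndepSet Pᶜ)
include hM

theorem colProbes_pairwise (j : ι) : (colProbes M j).Pairwise G.Adj := by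
  rintro _ ⟨p, ⟨hp, hpj⟩, rfl⟩ _ ⟨q, ⟨-, hqj⟩, rfl⟩ hpq
  exact adj_of_gss_adj (hM.adj_of_col (fun h => hpq (congrArg Subtype.val h)) hpj hqj) (Or.inl hp)

include hPc

theorem mem_colProbes_of_adj {w : ↥(setNS G P)ᶜ} (hw : ↑w ∉ P) {x : V} (hx : G.Adj w x) :
    ∃ j, M w j ∧ x ∈ colProbes M j := by
  have hxP : x ∈ P := by_contra fun hxP => hPc hw hxP hx.ne hx
  obtain ⟨j, hwj, hxj⟩ :=
    hM.exists_col_of_adj (v := ⟨x, mem_compl_setNS_of_mem hxP⟩) (gss_adj_of_adj hx)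
  exact ⟨j, hwj, _, ⟨hxP, hxj⟩, rfl⟩

theorem mem_setNS_of_forall_eq {y : ↥(setNS G P)ᶜ} (hy : ↑y ∉ P) {c : ι}
    (hyc : ∀ j, M y j → j = c) : ↑y ∈ setNS G P := by
  refine ⟨hy, fun a ha b hb hab => ?_⟩
  obtain ⟨i, hyi, hai⟩ := hM.mem_colProbes_of_adj hPc hy ha
  obtain ⟨j, hyj, hbj⟩ := hM.mem_colProbes_of_adj hPc hy hb
  rw [hyc i hyi] at hai
  rw [hyc j hyj] at hbj
  exact hM.colProbes_pairwise c hai hbj hab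

variable [LinearOrder ι] (hrow : ∀ v, {j | M v j}.OrdConnected)
include hrow

theorem inter_neighborSet_eq {w z : ↥(setNS G P)ᶜ} (hw : ↑w ∉ P) (hz : ↑z ∉ P) {c₁ c₂ : ι}
    (hc : c₁ ≤ c₂) (hwc : M w c₁) (hwle : ∀ j, M w j → j ≤ c₁) (hzc : M z c₂)
    (hzge : ∀ j, M z j → c₂ ≤ j) :
    G.neighborSet w ∩ G.neighborSet z = colProbes M c₁ ∩ colProbes M c₂ := by
  ext x
  constructor
  · rintro ⟨hxw, hxz⟩
    obtain ⟨i, hwi, hxi⟩ := hM.mem_colProbes_of_adj hPc hw hxw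
    obtain ⟨j, hzj, hxj⟩ := hM.mem_colProbes_of_adj hPc hz hxz
    have hx := (ordConnected_colProbes hrow x).out hxi hxj
    exact ⟨hx ⟨hwle i hwi, hc.trans (hzge j hzj)⟩, hx ⟨(hwle i hwi).trans hc, hzge j hzj⟩⟩
  · rintro ⟨⟨p, ⟨hp, hpc₁⟩, rfl⟩, hpc₂⟩
    have hpc₂ : M p c₂ := (coe_mem_colProbes.1 hpc₂).2
    exact ⟨adj_of_gss_adj (hM.adj_of_col (fun h => hw (h ▸ hp)) hwc hpc₁) (Or.inr hp),
      adj_of_gss_adj (hM.adj_of_col (fun h => hz (h ▸ hp)) hzc hpc₂) (Or.inr hp)⟩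

theorem gss_adj_iff_isMaxPClique_colProbes {w z : ↥(setNS G P)ᶜ} (hw : ↑w ∉ P) (hz : ↑z ∉ P)
    (hwz : w ≠ z) {c d : ι} (hcd : c ≤ d) (hwc : M w c) (hwle : ∀ j, M w j → j ≤ c)
    (hzd : M z d) (hzge : ∀ j, M z j → d ≤ j) (hdc : colProbes M d = colProbes M c) :
    (Gss G P).Adj w z ↔ IsMaxPClique G P (colProbes M c) := by
  have hcommon := hM.inter_neighborSet_eq hPc hrow hw hz hcd hwc hwle hzd hzge
  rw [hdc, inter_self] at hcommon
  rw [← hcommon]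
  refine gss_adj_iff_isMaxPClique hPc hw hz hwz ?_
  rw [hcommon]
  exact hM.colProbes_pairwise c

theorem isMaxPClique_colProbes_of_lt [IsStronglyCoatomic ι] {w : ↥(setNS G P)ᶜ} (hw : ↑w ∉ P)
    {c e : ι} (hwc : M w c) (hwle : ∀ j, M w j → j ≤ c) (hec : e < c)
    (hce : ∀ p : ↥(setNS G P)ᶜ, ↑p ∈ P → M p c → M p e) :
    IsMaxPClique G P (colProbes M c) := by
  obtain ⟨b, heb, hbc⟩ := exists_le_covBy_of_lt hec
  obtain ⟨y, hyc, hyb⟩ := hM.exists_mem_not_mem hbc.ne'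
  have hy : ↑y ∉ P := fun hyP => hyb ((hrow y).out (hce y hyP hyc) hyc ⟨heb, hbc.lt.le⟩)
  have hyge : ∀ j, M y j → c ≤ j := fun _ => (hrow y).ge_of_covBy hbc hyc hyb
  have hwy : w ≠ y := by
    rintro rfl
    exact w.2 (hM.mem_setNS_of_forall_eq hPc hw fun j hj => le_antisymm (hwle j hj) (hyge j hj))
  exact (hM.gss_adj_iff_isMaxPClique_colProbes hPc hrow hw hy hwy le_rfl hwc hwle hyc hyge
    rfl).1 (hM.adj_of_col hwy hwc hyc)

theorem exists_probe_mem_not_mem_of_covBy {v : ↥(setNS G P)ᶜ} (hv : ↑v ∉ P) {c d : ι}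
    (hcd : c ⋖ d) (hvc : M v c) (hvd : M v d) (hvge : ∀ j, M v j → c ≤ j) :
    ∃ p : ↥(setNS G P)ᶜ, ↑p ∈ P ∧ M p c ∧ ¬ M p d := by
  by_contra! hcd_probes
  have hnp : ∀ w : ↥(setNS G P)ᶜ, M w c → ¬ M w d → ↑w ∉ P :=
    fun w hwc hwd hwP => hwd (hcd_probes w hwP hwc)
  have hle : ∀ w : ↥(setNS G P)ᶜ, M w c → ¬ M w d → ∀ j, M w j → j ≤ c :=
    fun w hwc hwd _ => (hrow w).le_of_covBy hcd hwc hwd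
  obtain ⟨u, huc, hud⟩ := hM.exists_mem_not_mem hcd.ne
  have hmax : IsMaxPClique G P (colProbes M c) :=
    (hM.gss_adj_iff_isMaxPClique_colProbes hPc hrow (hnp u huc hud) hv (fun h => hud (h ▸ hvd))
      le_rfl huc (hle u huc hud) hvc hvge rfl).1 (hM.adj_of_col (fun h => hud (h ▸ hvd)) huc hvc)
  have hdc : colProbes M d = colProbes M c := by
    refine hmax.2 _ (colProbes_subset d) (hM.colProbes_pairwise d) ?_
    rintro _ ⟨p, ⟨hp, hpc⟩, rfl⟩
    exact ⟨p, ⟨hp, hcd_probes p hp hpc⟩, rfl⟩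
  -- every pair across columns `c` and `d` is now an edge of `G**`
  obtain ⟨a, b, hac, had, hbd, hbc, hab⟩ := hM.exists_not_adj_of_ne hcd.ne
  have hb : ↑b ∉ P := fun hbP =>
    hbc (coe_mem_colProbes.1 (hdc ▸ coe_mem_colProbes.2 ⟨hbP, hbd⟩)).2
  exact hab ((hM.gss_adj_iff_isMaxPClique_colProbes hPc hrow (hnp a hac had) hb
    (fun h => hbc (h ▸ hac)) hcd.lt.le hac (hle a hac had) hbd
    (fun _ => (hrow b).ge_of_covBy hcd hbd hbc) hdc).2 hmax)

theorem exists_meets_only_at_leftEnd [IsStronglyAtomic ι] {v : ↥(setNS G P)ᶜ} {c j : ι}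
    (hvc : M v c) (hvge : ∀ i, M v i → c ≤ i) (hvj : M v j) (hjc : j ≠ c) :
    ∃ u : ↥(setNS G P)ᶜ, (↑v ∈ P ∨ ↑u ∈ P) ∧ M u c ∧ ∀ i, M u i → M v i → i = c := by
  obtain ⟨d, hcd, hdj⟩ := exists_covBy_le_of_lt ((hvge j hvj).lt_of_ne hjc.symm)
  obtain ⟨u, hpr, huc, hud⟩ : ∃ u : ↥(setNS G P)ᶜ, (↑v ∈ P ∨ ↑u ∈ P) ∧ M u c ∧ ¬ M u d := by
    by_cases hv : ↑v ∈ P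
    · obtain ⟨u, huc, hud⟩ := hM.exists_mem_not_mem hcd.ne
      exact ⟨u, Or.inl hv, huc, hud⟩
    · have hvd : M v d := (hrow v).out hvc hvj ⟨hcd.lt.le, hdj⟩
      obtain ⟨p, hp, hpc, hpd⟩ :=
        hM.exists_probe_mem_not_mem_of_covBy hPc hrow hv hcd hvc hvd hvge
      exact ⟨p, Or.inr hp, hpc, hpd⟩
  exact ⟨u, hpr, huc, fun i hui hvi =>
    le_antisymm ((hrow u).le_of_covBy hcd huc hud hui) (hvge i hvi)⟩

theorem exists_meets_only_at_rightEnd [IsStronglyCoatomic ι] {v : ↥(setNS G P)ᶜ} {c j : ι}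
    (hvc : M v c) (hvle : ∀ i, M v i → i ≤ c) (hvj : M v j) (hjc : j ≠ c) :
    ∃ u : ↥(setNS G P)ᶜ, (↑v ∈ P ∨ ↑u ∈ P) ∧ M u c ∧ ∀ i, M u i → M v i → i = c :=
  exists_meets_only_at_leftEnd (ι := ιᵒᵈ) hM hPc (fun v => (hrow v).dual) hvc hvle hvj hjc

theorem exists_probe_not_iff_of_covBy [IsStronglyAtomic ι] [IsStronglyCoatomic ι] {c d : ι}
    (hcd : c ⋖ d) : ∃ p : ↥(setNS G P)ᶜ, ↑p ∈ P ∧ ¬ (M p c ↔ M p d) := by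
  by_contra! hagree
  obtain ⟨w, hwc, hwd⟩ := hM.exists_mem_not_mem hcd.ne
  obtain ⟨z, hzd, hzc⟩ := hM.exists_mem_not_mem hcd.ne'
  have hw : ↑w ∉ P := fun h => hwd ((hagree w h).1 hwc)
  have hz : ↑z ∉ P := fun h => hzc ((hagree z h).2 hzd)
  have hwle : ∀ j, M w j → j ≤ c := fun _ => (hrow w).le_of_covBy hcd hwc hwd
  have hzge : ∀ j, M z j → d ≤ j := fun _ => (hrow z).ge_of_covBy hcd hzd hzc
  have hdc : colProbes M d = colProbes M c := by
    ext x
    constructor <;> rintro ⟨p, ⟨hp, hpj⟩, rfl⟩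
    · exact ⟨p, ⟨hp, (hagree p hp).2 hpj⟩, rfl⟩
    · exact ⟨p, ⟨hp, (hagree p hp).1 hpj⟩, rfl⟩
  have hnmax : ¬ IsMaxPClique G P (colProbes M c) := by
    intro hmax
    obtain ⟨j, hwj, hzj⟩ := hM.exists_col_of_adj ((hM.gss_adj_iff_isMaxPClique_colProbes hPc hrow
      hw hz (fun h => hzc (h ▸ hwc)) hcd.lt.le hwc hwle hzd hzge hdc).2 hmax)
    exact (hzge j hzj).not_gt ((hwle j hwj).trans_lt hcd.lt)
  obtain ⟨K, hKP, hK, hcK, hKc⟩ :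
      ∃ K ⊆ P, K.Pairwise G.Adj ∧ colProbes M c ⊆ K ∧ K ≠ colProbes M c := by
    by_contra! h
    exact hnmax ⟨⟨colProbes_subset c, hM.colProbes_pairwise c⟩, h⟩
  obtain ⟨q, hqK, hqc⟩ := not_subset.1 fun h => hKc (h.antisymm hcK)
  obtain ⟨e, he⟩ := hM.exists_col_of_isClique (s := {x | ↑x ∈ K})
    fun x hx y hy hxy => gss_adj_of_adj (hK hx hy (Subtype.coe_injective.ne hxy))
  set q' : ↥(setNS G P)ᶜ := ⟨q, mem_compl_setNS_of_mem (hKP hqK)⟩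
  have hqe : M q' e := he q' hqK
  have hq'c : ¬ M q' c := fun h => hqc ⟨q', ⟨hKP hqK, h⟩, rfl⟩
  have hce : ∀ p : ↥(setNS G P)ᶜ, ↑p ∈ P → M p c → M p e :=
    fun p hp hpc => he p (hcK ⟨p, ⟨hp, hpc⟩, rfl⟩)
  rcases (show e ≠ c from fun h => hq'c (h ▸ hqe)).lt_or_gt with hec | hce'
  · exact hnmax (hM.isMaxPClique_colProbes_of_lt hPc hrow hw hwc hwle hec hce)
  · have hde : d < e := (hcd.ge_of_gt hce').lt_of_ne
      fun h => hq'c ((hagree q' (hKP hqK)).2 (h ▸ hqe))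
    have hmax : IsMaxPClique G P (colProbes M d) :=
      isMaxPClique_colProbes_of_lt (ι := ιᵒᵈ) hM hPc (fun v => (hrow v).dual) hz hzd hzge
        hde fun p hp hpd => hce p hp ((hagree p hp).2 hpd)
    exact hnmax (hdc ▸ hmax)

theorem exists_separated_of_covBy [IsStronglyAtomic ι] [IsStronglyCoatomic ι] {c d : ι}
    (hcd : c ⋖ d) :
    ∃ a b : ↥(setNS G P)ᶜ, (↑a ∈ P ∨ ↑b ∈ P) ∧ M a c ∧ M b d ∧ ¬ ∃ j, M a j ∧ M b j := by
  have hsep : ∀ a b : ↥(setNS G P)ᶜ, M a c → ¬ M a d → M b d → ¬ M b c →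
      ¬ ∃ j, M a j ∧ M b j := by
    rintro a b hac had hbd hbc ⟨j, haj, hbj⟩
    exact ((hrow b).ge_of_covBy hcd hbd hbc hbj).not_gt
      (((hrow a).le_of_covBy hcd hac had haj).trans_lt hcd.lt)
  obtain ⟨p, hp, hpcd⟩ := hM.exists_probe_not_iff_of_covBy hPc hrow hcd
  by_cases hpc : M p c
  · have hpd : ¬ M p d := fun hpd => hpcd (iff_of_true hpc hpd)
    obtain ⟨b, hbd, hbc⟩ := hM.exists_mem_not_mem hcd.ne'
    exact ⟨p, b, Or.inl hp, hpc, hbd, hsep p b hpc hpd hbd hbc⟩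
  · have hpd : M p d := by_contra fun hpd => hpcd (iff_of_false hpc hpd)
    obtain ⟨a, hac, had⟩ := hM.exists_mem_not_mem hcd.ne
    exact ⟨a, p, Or.inr hp, hac, hpd, hsep a p hac had hpd hpc⟩

end IsCliqueMatrix

theorem IsCliqueMatrix.represents {V : Type} {G : SimpleGraph V} {P : Set V} {k : ℕ}
    {M : ↥(setNS G P)ᶜ → Fin k → Prop} (hM : IsCliqueMatrix (Gss G P) M)
    (hPc : G.IsIndepSet Pᶜ) : Represents (G.induce (setNS G P)ᶜ) (probesPS G P) M := by
  intro u v huv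
  change G.Adj u v ↔ _
  constructor
  · intro h
    exact ⟨or_iff_not_and_not.2 fun ⟨hu, hv⟩ => hPc hu hv h.ne h,
      hM.exists_col_of_adj (gss_adj_of_adj h)⟩
  · rintro ⟨hp, j, hu, hv⟩
    exact adj_of_gss_adj (hM.adj_of_col huv hu hv) hp

section FinModel

variable {V : Type} {k : ℕ} {G : SimpleGraph V} {P : Set V} {M : V → Fin k → Prop}

theorem tautRow_of_forall_properEnd {v : V}
    (h : ∀ c, IsProperLeftEnd M v c ∨ IsProperRightEnd M v c →
      ∃ u, (v ∈ P ∨ u ∈ P) ∧ M u c ∧ ∀ i, M u i → M v i → i = c) :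
    TautRow P M v := by
  rintro M' ⟨c, hc, hM'⟩ heq
  obtain ⟨u, hpr, huc, honly⟩ := h c hc
  have hvc : M v c := hc.elim (·.1.1) (·.1.1)
  obtain ⟨j, hvj, hjc⟩ : ∃ j, M v j ∧ j ≠ c := hc.elim (·.2) (·.2)
  have huv : v ≠ u := by
    rintro rfl
    exact hjc (honly j hvj hvj)
  have hrep : RepAdj P M' v u := heq ▸ ⟨huv, hpr, c, hvc, huc⟩
  obtain ⟨-, -, i, hvi, hui⟩ := hrep
  rw [hM'] at hvi hui
  exact hvi.2 ⟨rfl, honly i hui.1 hvi.1⟩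

theorem mergeCols_self (M : V → Fin k → Prop) {i : ℕ} (hi : i + 1 < k) (v : V) :
    mergeCols M i v ⟨i, by omega⟩ ↔ M v ⟨i, by omega⟩ ∨ M v ⟨i + 1, hi⟩ := by
  simp [mergeCols]

theorem minimalModel_of_forall_exists_separated (hrep : Represents G P M)
    (h : ∀ i (hi : i + 1 < k), ∃ a b, (a ∈ P ∨ b ∈ P) ∧ M a ⟨i, by omega⟩ ∧ M b ⟨i + 1, hi⟩ ∧
      ¬ ∃ j, M a j ∧ M b j) :
    MinimalModel G P M := by
  rintro i ⟨hi, -, hrep'⟩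
  obtain ⟨a, b, hab, ha, hb, hsep⟩ := h i hi
  have hne : a ≠ b := by
    rintro rfl
    exact hsep ⟨_, ha, ha⟩
  have hadj := (hrep' a b hne).2 ⟨hab, ⟨i, by omega⟩, (mergeCols_self M hi a).2 (Or.inl ha),
    (mergeCols_self M hi b).2 (Or.inr hb)⟩
  exact hsep ((hrep a b hne).1 hadj).2

end FinModel

theorem stmt11_general {V : Type} (G : SimpleGraph V) (P : Set V)
    (hIndep : ∀ u v : V, u ∉ P → v ∉ P → ¬ G.Adj u v)
    {k : ℕ} (M : ↥((setNS G P)ᶜ) → Fin k → Prop)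
    (hM : IsC1CliqueMatrix (Gss G P) M) :
    IsNormalModel (G.induce ((setNS G P)ᶜ)) (probesPS G P) M := by
  have hcl := hM.isCliqueMatrix
  have hPc : G.IsIndepSet Pᶜ := fun u hu v hv _ => hIndep u v hu hv
  have hrow : ∀ v, {j | M v j}.OrdConnected := fun v => (hM.2 v).ordConnected
  have hrep := hcl.represents hPc
  refine ⟨⟨fun v => ⟨hcl.exists_col v, hM.2 v⟩, hrep⟩, fun v => tautRow_of_forall_properEnd ?_,
    minimalModel_of_forall_exists_separated hrep fun i hi =>
      hcl.exists_separated_of_covBy hPc hrow ?_⟩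
  · rintro c (⟨⟨hvc, hvge⟩, j, hvj, hjc⟩ | ⟨⟨hvc, hvle⟩, j, hvj, hjc⟩)
    · exact hcl.exists_meets_only_at_leftEnd hPc hrow hvc hvge hvj hjc
    · exact hcl.exists_meets_only_at_rightEnd hPc hrow hvc hvle hvj hjc
  · exact Fin.covBy_iff.2 (Nat.covBy_iff_add_one_eq.2 rfl)

/-- Let `G` be a connected probe interval graph. Every consecutive-ones
ordered clique matrix of `G**`, interpreted as a probe interval model with probes `P`
and non-probes `N \ N_S`, is a normal probe interval model of `G - N_S`. -/
theorem stmt11 {V : Type} (G : SimpleGraph V) (P : Set V)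
    (hIndep : ∀ u v : V, u ∉ P → v ∉ P → ¬ G.Adj u v)
    (hConn : G.Connected) (hPIG : IsPIGraph G P)
    {k : ℕ} (M : ↥((setNS G P)ᶜ) → Fin k → Prop)
    (hM : IsC1CliqueMatrix (Gss G P) M) :
    IsNormalModel (G.induce ((setNS G P)ᶜ)) (probesPS G P) M :=
  stmt11_general G P hIndep M hM
end

section
/- Let G be a connected probe interval graph and let (c, d₁, d₂, …, d_k, c') be consecutive columns, in left-to-right order, of a normal probe interval model of G − N_S, where c and c' are clique columns and each d_i is a semi-clique column. Then there is an index h with 0 ≤ h ≤ k such that the probe sets of d₁, …, d_h are subsets of the probe set of c, the probe sets of d_{h+1}, …, d_k are subsets of the probe set of c', the sequence of probe sets of c, d₁, …, d_h is strictly decreasing under inclusion, and the sequence of probe sets of d_{h+1}, …, d_k, c' is strictly increasing under inclusion. -/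
open Set

/-! Columns `n` and `n + 1` of a minimal model cannot be merged, and merging them fails only
if two vertices, at least one a probe, have intervals meeting exactly at the boundary: so some
probe ends at `n` or starts at `n + 1`. A left semi-clique column has no probe left endpoint,
hence its probe set is strictly contained in that of the column before it; symmetrically a
right semi-clique column has probe set strictly contained in that of the column after it. A
right semi-clique column cannot be followed by a left one, so the `dₜ` form a block of left
semi-clique columns followed by a block of right ones. -/

theorem exists_left_prefix_right_suffix {L R : ℕ → Prop} {n : ℕ}
    (hLR : ∀ t, 1 ≤ t → t ≤ n → L t ∨ R t)
    (hRL : ∀ t, 1 ≤ t → t < n → R t → ¬ L (t + 1)) :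
    ∃ h ≤ n, (∀ t, 1 ≤ t → t ≤ h → L t) ∧ (∀ t, h < t → t ≤ n → R t) := by
  induction n with
  | zero => exact ⟨0, le_rfl, fun t h1 h2 => by omega, fun t h1 h2 => by omega⟩
  | succ n ih =>
    obtain ⟨h, hhn, hL, hR⟩ :=
      ih (fun t h1 h2 => hLR t h1 (by omega)) (fun t h1 h2 => hRL t h1 (by omega))
    by_cases hext : h = n ∧ L (n + 1)
    · refine ⟨n + 1, le_rfl, fun t h1 h2 => ?_, fun t h1 h2 => by omega⟩
      rcases Nat.lt_or_ge t (n + 1) with ht | ht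
      · exact hL t h1 (by omega)
      · exact (show t = n + 1 by omega) ▸ hext.2
    · refine ⟨h, by omega, hL, fun t h1 h2 => ?_⟩
      rcases Nat.lt_or_ge t (n + 1) with ht | ht
      · exact hR t h1 (by omega)
      obtain rfl : t = n + 1 := by omega
      refine (hLR (n + 1) (by omega) le_rfl).resolve_left fun hLn => ?_
      have hhn' : h < n := lt_of_le_of_ne hhn fun he => hext ⟨he, hLn⟩
      exact hRL n (by omega) (by omega) (hR n hhn' le_rfl) hLn

section ProbeIntervalModel

variable {W : Type} {K : ℕ} {M : W → Fin K → Prop}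

theorem RowsOK.exists_isLeftEnd (hR : RowsOK M) (v : W) : ∃ c, IsLeftEnd M v c := by
  obtain ⟨c, hc, hmin⟩ := Set.exists_min_image {j | M v j} id (Set.toFinite _) (hR v).1
  exact ⟨c, hc, hmin⟩

theorem RowsOK.exists_isRightEnd (hR : RowsOK M) (v : W) : ∃ c, IsRightEnd M v c := by
  obtain ⟨c, hc, hmax⟩ := Set.exists_max_image {j | M v j} id (Set.toFinite _) (hR v).1
  exact ⟨c, hc, hmax⟩

theorem RowsOK.of_le_of_le (hR : RowsOK M) {v : W} {a b c : Fin K} (hab : a ≤ b) (hbc : b ≤ c)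
    (ha : M v a) (hc : M v c) : M v b :=
  (hR v).2 a b c hab hbc ha hc

theorem mergeCols_iff {i : ℕ} {v : W} {b : Fin (K - 1)} :
    mergeCols M i v b ↔
      ∃ m : Fin K, M v m ∧ (m.val ≤ i ∧ b.val = m.val ∨ i < m.val ∧ b.val + 1 = m.val) := by
  unfold mergeCols
  constructor
  · split_ifs with h1 h2
    · exact fun hb => ⟨_, hb, Or.inl ⟨by simp; omega, rfl⟩⟩
    · rintro (hb | hb)
      · exact ⟨_, hb, Or.inl ⟨le_rfl, h2⟩⟩
      · exact ⟨_, hb, Or.inr ⟨by simp, by simp [h2]⟩⟩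
    · exact fun hb => ⟨_, hb, Or.inr ⟨by simp; omega, rfl⟩⟩
  · rintro ⟨m, hm, hbm⟩
    have hb : ∀ n (hn : n < K), n = m.val → M v ⟨n, hn⟩ := fun n hn hnm => by
      obtain rfl : (⟨n, hn⟩ : Fin K) = m := Fin.ext hnm
      exact hm
    split_ifs with h1 h2
    · exact hb _ _ (by omega)
    · rcases Nat.lt_or_ge i m.val with him | him
      · exact Or.inr (hb _ _ (by omega))
      · exact Or.inl (hb _ _ (by omega))
    · exact hb _ _ (by omega)

theorem RowsOK.mergeCols {i : ℕ} (hi : i + 1 < K) (hR : RowsOK M) :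
    RowsOK (mergeCols M i) := by
  intro v
  constructor
  · obtain ⟨m, hm⟩ := (hR v).1
    rcases Nat.lt_or_ge i m.val with him | him
    · exact ⟨⟨m.val - 1, by omega⟩, mergeCols_iff |>.mpr ⟨m, hm, by simp; omega⟩⟩
    · exact ⟨⟨m.val, by omega⟩, mergeCols_iff |>.mpr ⟨m, hm, by simp; omega⟩⟩
  · intro a b c hab hbc ha hc
    obtain ⟨α, hα, hαa⟩ := (mergeCols_iff).mp ha
    obtain ⟨γ, hγ, hγc⟩ := (mergeCols_iff).mp hc
    have hab : a.val ≤ b.val := hab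
    have hbc : b.val ≤ c.val := hbc
    suffices ∃ m : ℕ, ∃ hm : m < K, M v ⟨m, hm⟩ ∧ (m ≤ i ∧ b.val = m ∨ i < m ∧ b.val + 1 = m) by
      obtain ⟨m, hm, hMm, hbm⟩ := this
      exact (mergeCols_iff).mpr ⟨_, hMm, hbm⟩
    have between : ∀ m (hm : m < K), α.val ≤ m → m ≤ γ.val → M v ⟨m, hm⟩ := fun m hm h1 h2 =>
      hR.of_le_of_le (a := α) (c := γ) (Fin.le_def.mpr h1) (Fin.le_def.mpr h2) hα hγ
    rcases lt_trichotomy b.val i with hbi | hbi | hbi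
    · exact ⟨b.val, by omega, between _ _ (by omega) (by omega), by omega⟩
    · by_cases hαi : α.val = i + 1
      · exact ⟨α.val, α.isLt, hα, by omega⟩
      by_cases hγi : γ.val ≤ i
      · exact ⟨γ.val, γ.isLt, hγ, by omega⟩
      exact ⟨i, by omega, between _ _ (by omega) (by omega), by omega⟩
    · exact ⟨b.val + 1, by omega, between _ _ (by omega) (by omega), by omega⟩

theorem RowsOK.isRightEnd_isLeftEnd_of_disjoint (hR : RowsOK M) {i : ℕ} (hi : i + 1 < K)
    {u v : W} (hu : M u ⟨i, by omega⟩) (hv : M v ⟨i + 1, hi⟩)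
    (huv : ∀ m, M u m → ¬ M v m) :
    IsRightEnd M u ⟨i, by omega⟩ ∧ IsLeftEnd M v ⟨i + 1, hi⟩ := by
  refine ⟨⟨hu, fun m hm => ?_⟩, ⟨hv, fun m hm => ?_⟩⟩
  · by_contra! him
    exact huv _ (hR.of_le_of_le (b := ⟨i + 1, hi⟩) (Fin.le_def.mpr (Nat.le_succ i))
      (Fin.le_def.mpr (Fin.lt_def.mp him)) hu hm) hv
  · by_contra! him
    exact huv _ hu (hR.of_le_of_le (Fin.le_def.mpr (Nat.le_of_lt_succ (Fin.lt_def.mp him)))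
      (Fin.le_def.mpr (Nat.le_succ i)) hm hv)

variable {H : SimpleGraph W} {Q : Set W}

theorem Represents.mergeCols {i : ℕ} (hi : i + 1 < K) (hR : RowsOK M) (hRep : Represents H Q M)
    (hQ : ∀ p ∈ Q, ¬ IsRightEnd M p ⟨i, by omega⟩ ∧ ¬ IsLeftEnd M p ⟨i + 1, hi⟩) :
    Represents H Q (mergeCols M i) := by
  intro u v huv
  rw [hRep u v huv]
  refine and_congr_right fun hpq => ⟨?_, ?_⟩
  · rintro ⟨m, hum, hvm⟩
    rcases Nat.lt_or_ge i m.val with him | him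
    · exact ⟨⟨m.val - 1, by omega⟩, mergeCols_iff.mpr ⟨m, hum, by simp; omega⟩,
        mergeCols_iff.mpr ⟨m, hvm, by simp; omega⟩⟩
    · exact ⟨⟨m.val, by omega⟩, mergeCols_iff.mpr ⟨m, hum, by simp; omega⟩,
        mergeCols_iff.mpr ⟨m, hvm, by simp; omega⟩⟩
  · rintro ⟨b, hub, hvb⟩
    by_contra! hsh
    obtain ⟨mu, hmu, hbu⟩ := mergeCols_iff.mp hub
    obtain ⟨mv, hmv, hbv⟩ := mergeCols_iff.mp hvb
    have hne : mu.val ≠ mv.val := fun h => hsh mu hmu (Fin.ext h ▸ hmv)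
    rcases (by omega : mu.val = i ∧ mv.val = i + 1 ∨ mu.val = i + 1 ∧ mv.val = i)
      with ⟨hmui, hmvi⟩ | ⟨hmui, hmvi⟩
    · obtain rfl : mu = ⟨i, Nat.lt_of_succ_lt hi⟩ := Fin.ext hmui
      obtain rfl : mv = ⟨i + 1, hi⟩ := Fin.ext hmvi
      obtain ⟨huR, hvL⟩ := hR.isRightEnd_isLeftEnd_of_disjoint hi hmu hmv hsh
      rcases hpq with hu | hv
      exacts [(hQ u hu).1 huR, (hQ v hv).2 hvL]
    · obtain rfl : mv = ⟨i, Nat.lt_of_succ_lt hi⟩ := Fin.ext hmvi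
      obtain rfl : mu = ⟨i + 1, hi⟩ := Fin.ext hmui
      obtain ⟨hvR, huL⟩ :=
        hR.isRightEnd_isLeftEnd_of_disjoint hi hmv hmu fun m hv hu => hsh m hu hv
      rcases hpq with hu | hv
      exacts [(hQ u hu).2 huL, (hQ v hv).1 hvR]

theorem IsPIModel.exists_probe_isRightEnd_or_isLeftEnd (hPI : IsPIModel H Q M) {i : ℕ}
    (hi : i + 1 < K) (hmin : ¬ CanMerge H Q M i) :
    ∃ p ∈ Q, IsRightEnd M p ⟨i, by omega⟩ ∨ IsLeftEnd M p ⟨i + 1, hi⟩ := by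
  by_contra! hQ
  exact hmin ⟨hi, hPI.1.mergeCols hi, hPI.2.mergeCols hi hPI.1 hQ⟩

theorem RowsOK.probeSetAt_succ_subset (hR : RowsOK M) {n : ℕ} (hn : n + 1 < K)
    (hQ : ∀ p ∈ Q, ¬ IsLeftEnd M p ⟨n + 1, hn⟩) :
    probeSetAt Q M (n + 1) ⊆ probeSetAt Q M n := by
  rintro v ⟨hvQ, _, hv⟩
  obtain ⟨l, hl, hlmin⟩ := hR.exists_isLeftEnd v
  have hln : l.val ≠ n + 1 := fun h => hQ v hvQ ((Fin.ext h : l = ⟨n + 1, hn⟩) ▸ ⟨hl, hlmin⟩)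
  have hlv : l.val ≤ n + 1 := hlmin _ hv
  exact ⟨hvQ, by omega, hR.of_le_of_le (b := ⟨n, by omega⟩)
    (Fin.le_def.mpr (show l.val ≤ n by omega)) (Fin.le_def.mpr (Nat.le_succ n)) hl hv⟩

theorem RowsOK.probeSetAt_subset_succ (hR : RowsOK M) {n : ℕ} (hn : n + 1 < K)
    (hQ : ∀ p ∈ Q, ¬ IsRightEnd M p ⟨n, by omega⟩) :
    probeSetAt Q M n ⊆ probeSetAt Q M (n + 1) := by
  rintro v ⟨hvQ, _, hv⟩
  obtain ⟨r, hr, hrmax⟩ := hR.exists_isRightEnd v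
  have hrn : r.val ≠ n := fun h => hQ v hvQ ((Fin.ext h : r = ⟨n, by omega⟩) ▸ ⟨hr, hrmax⟩)
  have hvr : n ≤ r.val := hrmax _ hv
  exact ⟨hvQ, hn, hR.of_le_of_le (b := ⟨n + 1, hn⟩) (Fin.le_def.mpr (Nat.le_succ n))
    (Fin.le_def.mpr (show n + 1 ≤ r.val by omega)) hv hr⟩

theorem IsPIModel.probeSetAt_succ_ssubset (hPI : IsPIModel H Q M) {n : ℕ} (hn : n + 1 < K)
    (hmin : ¬ CanMerge H Q M n) (hQ : ∀ p ∈ Q, ¬ IsLeftEnd M p ⟨n + 1, hn⟩) :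
    probeSetAt Q M (n + 1) ⊂ probeSetAt Q M n := by
  obtain ⟨p, hp, hpR | hpL⟩ := hPI.exists_probe_isRightEnd_or_isLeftEnd hn hmin
  · refine (ssubset_iff_of_subset (hPI.1.probeSetAt_succ_subset hn hQ)).mpr
      ⟨p, ⟨hp, by omega, hpR.1⟩, ?_⟩
    rintro ⟨-, _, hpn⟩
    have : n + 1 ≤ n := hpR.2 _ hpn
    omega
  · exact absurd hpL (hQ p hp)

theorem IsPIModel.probeSetAt_ssubset_succ (hPI : IsPIModel H Q M) {n : ℕ} (hn : n + 1 < K)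
    (hmin : ¬ CanMerge H Q M n) (hQ : ∀ p ∈ Q, ¬ IsRightEnd M p ⟨n, by omega⟩) :
    probeSetAt Q M n ⊂ probeSetAt Q M (n + 1) := by
  obtain ⟨p, hp, hpR | hpL⟩ := hPI.exists_probe_isRightEnd_or_isLeftEnd hn hmin
  · exact absurd hpR (hQ p hp)
  · refine (ssubset_iff_of_subset (hPI.1.probeSetAt_subset_succ hn hQ)).mpr
      ⟨p, ⟨hp, hn, hpL.1⟩, ?_⟩
    rintro ⟨-, _, hpn⟩
    have : n + 1 ≤ n := hpL.2 _ hpn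
    omega

theorem IsPIModel.not_isLeftSemiCol_succ (hPI : IsPIModel H Q M) {n : ℕ} (hn : n + 1 < K)
    (hmin : ¬ CanMerge H Q M n) (hRc : IsRightSemiCol Q M ⟨n, by omega⟩) :
    ¬ IsLeftSemiCol Q M ⟨n + 1, hn⟩ := fun hLc => by
  obtain ⟨p, hp, hpR | hpL⟩ := hPI.exists_probe_isRightEnd_or_isLeftEnd hn hmin
  exacts [hRc.2.2.1 p hp hpR, hLc.2.2.1 p hp hpL]

end ProbeIntervalModel

/-- Let `(c, d₁, …, d_kk, c')` be consecutive columns (at positions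
`i, i+1, …, i+kk+1`), in left-to-right order, of a normal probe interval model of
`G - N_S`, where `c` and `c'` are clique columns and each `d_t` is a semi-clique
column.  Then there is `h ≤ kk` such that the probe sets of `d₁, …, d_h` are subsets
of the probe set of `c`, the probe sets of `d_{h+1}, …, d_kk` are subsets of the probe
set of `c'`, the probe sets of `c, d₁, …, d_h` are strictly decreasing under
inclusion, and the probe sets of `d_{h+1}, …, d_kk, c'` are strictly increasing
under inclusion. -/
theorem stmt15 {V : Type} (G : SimpleGraph V) (P : Set V)
    {K : ℕ} (M : ↥((setNS G P)ᶜ) → Fin K → Prop)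
    (hM : IsNormalModel (G.induce ((setNS G P)ᶜ)) (probesPS G P) M)
    (i kk : ℕ) (hiK : i + kk + 1 < K)
    (hd : ∀ t : ℕ, ∀ _h1 : 1 ≤ t, ∀ _h2 : t ≤ kk,
      IsSemiCol (probesPS G P) M ⟨i + t, by omega⟩) :
    ∃ h : ℕ, h ≤ kk ∧
      (∀ t : ℕ, 1 ≤ t → t ≤ h →
        probeSetAt (probesPS G P) M (i + t) ⊆ probeSetAt (probesPS G P) M i) ∧
      (∀ t : ℕ, h + 1 ≤ t → t ≤ kk →
        probeSetAt (probesPS G P) M (i + t) ⊆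
          probeSetAt (probesPS G P) M (i + kk + 1)) ∧
      (∀ t : ℕ, t < h →
        probeSetAt (probesPS G P) M (i + t + 1) ⊂
          probeSetAt (probesPS G P) M (i + t)) ∧
      (∀ t : ℕ, h + 1 ≤ t → t ≤ kk →
        probeSetAt (probesPS G P) M (i + t) ⊂
          probeSetAt (probesPS G P) M (i + t + 1)) := by
  obtain ⟨hPI, -, hmin⟩ := hM
  obtain ⟨h, hhk, hL, hR⟩ := exists_left_prefix_right_suffix
    (L := fun t => ∃ ht : i + t < K, IsLeftSemiCol (probesPS G P) M ⟨i + t, ht⟩)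
    (R := fun t => ∃ ht : i + t < K, IsRightSemiCol (probesPS G P) M ⟨i + t, ht⟩)
    (fun t h1 h2 => (hd t h1 h2).imp (⟨_, ·⟩) (⟨_, ·⟩))
    (fun t _ ht ⟨_, hRt⟩ ⟨_, hLt⟩ => hPI.not_isLeftSemiCol_succ (by omega) (hmin _) hRt hLt)
  set s := fun t => probeSetAt (probesPS G P) M (i + t)
  have hdec : StrictAntiOn s (Icc 0 h) := strictAntiOn_of_add_one_lt ordConnected_Icc
    fun t _ _ ⟨_, ht⟩ =>
      hPI.probeSetAt_succ_ssubset (n := i + t) (by omega) (hmin _)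
        (hL (t + 1) (by omega) ht).2.2.2.1
  have hinc : StrictMonoOn s (Icc (h + 1) (kk + 1)) := strictMonoOn_of_lt_add_one ordConnected_Icc
    fun t _ ⟨ht, _⟩ ⟨_, ht'⟩ =>
      hPI.probeSetAt_ssubset_succ (n := i + t) (by omega) (hmin _) (hR t ht (by omega)).2.2.2.1
  refine ⟨h, hhk, fun t _ ht => ?_, fun t ht ht' => ?_, fun t ht => ?_, fun t ht ht' => ?_⟩
  · exact hdec.antitoneOn ⟨le_rfl, Nat.zero_le _⟩ ⟨Nat.zero_le _, ht⟩ (Nat.zero_le t)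
  · exact hinc.monotoneOn ⟨ht, by omega⟩ ⟨by omega, le_rfl⟩ (by omega)
  · exact hdec ⟨Nat.zero_le _, ht.le⟩ ⟨Nat.zero_le _, ht⟩ (Nat.lt_succ_self t)
  · exact hinc ⟨ht, by omega⟩ ⟨by omega, by omega⟩ (Nat.lt_succ_self t)
end

section
/- Let M be a consecutive-ones ordered 0-1 matrix and let X be a nonempty set of columns of M that is consecutive in the column order and does not properly overlap the column set of any row of M. Then the column ordering obtained by reversing the order of the columns in X, keeping all other columns fixed, is again a consecutive-ones ordering of M. -/
open Set

/-!
A row that does not properly overlap `X` either misses `X`, contains `X`, or lies inside `X`.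
In the first two cases the reversal `σ`, which only moves columns of `X` among themselves,
leaves the row's column set unchanged. In the third the pulled-back row lies inside the
interval `X`, on which `σ` reverses the order, and the reverse of an interval is an interval.
-/

theorem not_properOverlap_iff {α : Type} {A B : Set α} :
    ¬ ProperOverlap A B ↔ Disjoint A B ∨ A ⊆ B ∨ B ⊆ A := by
  simp only [ProperOverlap, ← not_disjoint_iff_nonempty_inter, sdiff_nonempty, not_and_or,
    not_not]

section SupportedIn

variable {α : Type} {X S : Set α} {f : α → α}

theorem mem_of_apply_mem (hfix : ∀ j, j ∉ X → f j = j) {j : α} (h : f j ∈ X) : j ∈ X := by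
  by_contra hj
  exact hj (hfix j hj ▸ h)

theorem preimage_eq_self_of_subset_or_disjoint (hfix : ∀ j, j ∉ X → f j = j)
    (hmap : ∀ j, j ∈ X → f j ∈ X) (h : X ⊆ S ∨ Disjoint X S) : f ⁻¹' S = S := by
  ext j
  by_cases hj : j ∈ X
  · rcases h with hXS | hXS
    · exact iff_of_true (hXS (hmap j hj)) (hXS hj)
    · exact iff_of_false (hXS.notMem_of_mem_left (hmap j hj)) (hXS.notMem_of_mem_left hj)
  · rw [mem_preimage, hfix j hj]

end SupportedIn

section Reversal

variable {n : ℕ} {X S : Set (Fin n)} {σ : Fin n → Fin n}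

theorem ConsecSet.preimage_of_subset (hS : ConsecSet S) (hSX : S ⊆ X) (hX : ConsecSet X)
    (hfix : ∀ j, j ∉ X → σ j = j)
    (hrev : ∀ i, i ∈ X → ∀ j, j ∈ X → (i ≤ j ↔ σ j ≤ σ i)) :
    ConsecSet (σ ⁻¹' S) := by
  intro i j l hij hjl hi hl
  have hiX : i ∈ X := mem_of_apply_mem hfix (hSX hi)
  have hlX : l ∈ X := mem_of_apply_mem hfix (hSX hl)
  have hjX : j ∈ X := hX i j l hij hjl hiX hlX
  exact hS (σ l) (σ j) (σ i) ((hrev j hjX l hlX).mp hjl) ((hrev i hiX j hjX).mp hij) hl hi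

theorem ConsecSet.preimage_of_not_properOverlap (hS : ConsecSet S) (hX : ConsecSet X)
    (hnov : ¬ ProperOverlap X S) (hfix : ∀ j, j ∉ X → σ j = j)
    (hmap : ∀ j, j ∈ X → σ j ∈ X)
    (hrev : ∀ i, i ∈ X → ∀ j, j ∈ X → (i ≤ j ↔ σ j ≤ σ i)) :
    ConsecSet (σ ⁻¹' S) := by
  rcases not_properOverlap_iff.mp hnov with hdisj | hXS | hSX
  · rwa [preimage_eq_self_of_subset_or_disjoint hfix hmap (Or.inr hdisj)]
  · rwa [preimage_eq_self_of_subset_or_disjoint hfix hmap (Or.inl hXS)]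
  · exact hS.preimage_of_subset hSX hX hfix hrev

end Reversal

theorem stmt17_general {R : Type} {n : ℕ} (M : R → Fin n → Prop)
    (hOrd : ∀ r, ConsecSet {j | M r j})
    (X : Set (Fin n)) (hX : ConsecSet X)
    (hnov : ∀ r, ¬ ProperOverlap X {j | M r j})
    (σ : Equiv.Perm (Fin n))
    (hfix : ∀ j, j ∉ X → σ j = j)
    (hmap : ∀ j, j ∈ X → σ j ∈ X)
    (hrev : ∀ i, i ∈ X → ∀ j, j ∈ X → (i ≤ j ↔ σ j ≤ σ i)) :
    ∀ r, ConsecSet {j | M r (σ j)} := fun r =>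
  (hOrd r).preimage_of_not_properOverlap hX (hnov r) hfix hmap hrev

/-- Let `M` be a consecutive-ones ordered 0-1 matrix and `X` a nonempty
consecutive set of columns that does not properly overlap the column set of any row.
Reversing the order of the columns of `X` (via the permutation `σ` that fixes all
columns outside `X` and reverses `X`), keeping all other columns fixed, again gives
a consecutive-ones ordering of `M`. -/
theorem stmt17 {R : Type} {n : ℕ} (M : R → Fin n → Prop)
    (hOrd : ∀ r, ConsecSet {j | M r j})
    (X : Set (Fin n)) (hne : X.Nonempty) (hX : ConsecSet X)
    (hnov : ∀ r, ¬ ProperOverlap X {j | M r j})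
    (σ : Equiv.Perm (Fin n))
    (hfix : ∀ j, j ∉ X → σ j = j)
    (hmap : ∀ j, j ∈ X → σ j ∈ X)
    (hrev : ∀ i, i ∈ X → ∀ j, j ∈ X → (i ≤ j ↔ σ j ≤ σ i)) :
    ∀ r, ConsecSet {j | M r (σ j)} :=
  stmt17_general M hOrd X hX hnov σ hfix hmap hrev
end

section
/- Let M be a probe matrix with row set R of rows containing no ∗ and column set C of columns containing no ∗; let M_R be the submatrix of M on rows R and all columns, and let M_C be the submatrix of M on columns C and all rows. Then the consecutive-ones probe matrix problem for M has a solution if and only if there exists a linear ordering π of the columns of M such that π is a consecutive-ones ordering of M_R and the relative order that π induces on the columns of C is a consecutive-ones ordering of M_C. -/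
open Set

/-!
A row of a probe matrix, read in a fixed column order, can be completed to a row with
consecutive ones exactly when no known 0 lies between two known 1's: fill with 1 precisely
the ∗'s lying between the first and the last known 1. Rows of `Rs` have no ∗, so for them
this says the ones are consecutive; every other row is known exactly on the columns of
`Cs`, so for it this says the ones are consecutive among the columns of `Cs`.
-/

theorem consecSet_iff_ordConnected {k : ℕ} (A : Set (Fin k)) :
    ConsecSet A ↔ A.OrdConnected :=
  ⟨fun h => ⟨fun _ hi _ hl _ hj => h _ _ _ hj.1 hj.2 hi hl⟩,
    fun h _ _ _ hij hjl hi hl => h.out hi hl ⟨hij, hjl⟩⟩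

/-- `none` encodes the entry `∗`. -/
def NoZeroBetweenOnes {α : Type*} [Preorder α] (x : α → Option Bool) : Prop :=
  ∀ ⦃i j l⦄, i ≤ j → j ≤ l → x i = some true → x l = some true → x j ≠ some false

theorem exists_completion_ordConnected_iff {α : Type*} [Preorder α] (x : α → Option Bool) :
    (∃ b : α → Bool, (∀ j c, x j = some c → b j = c) ∧ {j | b j = true}.OrdConnected) ↔
      NoZeroBetweenOnes x := by
  classical
  constructor
  · rintro ⟨b, hb, hcon⟩ i j l hij hjl hi hl hj
    have : b j = true := hcon.out (hb _ _ hi) (hb _ _ hl) ⟨hij, hjl⟩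
    simp [hb _ _ hj] at this
  · intro hx
    let ones := {j | x j = some true}
    let hull : Set α := (upperClosure ones : Set α) ∩ lowerClosure ones
    refine ⟨fun j => decide (j ∈ hull), fun j c hj => ?_, ?_⟩
    · cases c
      · simp only [decide_eq_false_iff_not]
        rintro ⟨⟨i, hi, hij⟩, ⟨l, hl, hjl⟩⟩
        exact hx hij hjl hi hl hj
      · simpa using ⟨⟨j, hj, le_rfl⟩, ⟨j, hj, le_rfl⟩⟩
    · simpa using
        (upperClosure ones).upper.ordConnected.inter (lowerClosure ones).lower.ordConnected

theorem exists_completion_consecutive_iff {R : Type} {n : ℕ} (M : R → Fin n → Option Bool) :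
    (∃ M' : R → Fin n → Bool, (∀ r j (b : Bool), M r j = some b → M' r j = b) ∧
        ∃ σ : Equiv.Perm (Fin n), ∀ r, ConsecSet {j | M' r (σ j) = true}) ↔
      ∃ σ : Equiv.Perm (Fin n), ∀ r, NoZeroBetweenOnes fun j => M r (σ j) := by
  constructor
  · rintro ⟨M', hM', σ, hcons⟩
    refine ⟨σ, fun r => (exists_completion_ordConnected_iff _).1
      ⟨fun j => M' r (σ j), fun j c h => hM' _ _ _ h, ?_⟩⟩
    exact (consecSet_iff_ordConnected _).1 (hcons r)
  · rintro ⟨σ, hσ⟩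
    choose b hb hcon using fun r => (exists_completion_ordConnected_iff _).2 (hσ r)
    refine ⟨fun r c => b r (σ.symm c), fun r c v h => hb r _ _ (by simpa using h), σ,
      fun r => ?_⟩
    simpa [consecSet_iff_ordConnected] using hcon r

/-- Let `M` be a probe matrix (entries in `{0, 1, ∗}`, encoded as
`Option Bool` with `none = ∗`) whose `∗` entries are exactly those outside the rows
of `Rs` and outside the columns of `Cs`.  The consecutive-ones probe matrix problem
for `M` has a solution iff there is a linear ordering `σ` of the columns of `M` that
is a consecutive-ones ordering of the submatrix `M_R` (rows `Rs`, all columns) and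
whose induced relative order on the columns of `Cs` is a consecutive-ones ordering of
the submatrix `M_C` (columns `Cs`, all rows). -/
theorem stmt18 {Rw : Type} {n : ℕ} (M : Rw → Fin n → Option Bool)
    (Rs : Set Rw) (Cs : Set (Fin n))
    (hstar : ∀ r j, M r j = none ↔ (r ∉ Rs ∧ j ∉ Cs)) :
    (∃ M' : Rw → Fin n → Bool,
        (∀ r j (b : Bool), M r j = some b → M' r j = b) ∧
        ∃ σ : Equiv.Perm (Fin n), ∀ r, ConsecSet {j | M' r (σ j) = true}) ↔
      (∃ σ : Equiv.Perm (Fin n),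
        (∀ r ∈ Rs, ConsecSet {j | M r (σ j) = some true}) ∧
        (∀ r, ∀ i j l : Fin n, i ≤ j → j ≤ l →
          σ i ∈ Cs → σ j ∈ Cs → σ l ∈ Cs →
          M r (σ i) = some true → M r (σ l) = some true →
          M r (σ j) = some true)) := by
  rw [exists_completion_consecutive_iff]
  have known : ∀ {r c}, r ∈ Rs ∨ c ∈ Cs → M r c ≠ none := fun h hn => by
    have := (hstar _ _).1 hn; tauto
  have eq_true : ∀ {o : Option Bool}, o ≠ none → o ≠ some false → o = some true := by
    decide
  refine exists_congr fun σ => ⟨fun h => ⟨fun r hr i j l hij hjl hi hl => ?_,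
    fun r i j l hij hjl _ hj _ hi hl => ?_⟩, fun ⟨hR, hC⟩ r i j l hij hjl hi hl => ?_⟩
  · exact eq_true (known (.inl hr)) (h r hij hjl hi hl)
  · exact eq_true (known (.inr hj)) (h r hij hjl hi hl)
  · dsimp only at hi hl ⊢
    by_cases hr : r ∈ Rs
    · have hj : M r (σ j) = some true := hR r hr i j l hij hjl hi hl
      simp [hj]
    by_cases hj : σ j ∈ Cs
    · have in_Cs : ∀ {c}, M r c = some true → c ∈ Cs := fun hc => by
        by_contra h; simp [(hstar r _).2 ⟨hr, h⟩] at hc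
      simp [hC r i j l hij hjl (in_Cs hi) hj (in_Cs hl) hi hl]
    · simp [(hstar r _).2 ⟨hr, hj⟩]
end
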